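/- Let r : C1 → C2 be an F-linear exact (triangulated) functor between F-linear triangulated categories equipped with weight structures. Assume: (1) the weight structure on C1 is bounded; (2) the heart C_{1,w=0} is semi-primary and pseudo-Abelian; (3) r is weight exact; (4) the induced functor r_{w=0} on hearts is full; (5) r_{w=0} is conservative. Then r is conservative, i.e., any morphism f in C1 such that r(f) is an isomorphism is itself an isomorphism. -/

import Mathlib

/-!
If `r f` is an isomorphism, `r` kills the cone `Z` of `f`, and it suffices to show that an object
`Z` of bounded weights with `r Z = 0` vanishes. We lower the top weight `n` of `Z` one step at a
time. In a weight decomposition `A ⟶ Z ⟶ B ⟶(δ) A⟦1⟧` at `n`, `r δ` is an isomorphism since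
`r Z = 0`, so `r A ≅ (r B)⟦-1⟧` has weights `≥ n - 1`. In a weight decomposition
`A' ⟶ A ⟶(π) B'` at `n - 1`, the morphism `A' ⟶ A` then dies under `r` by orthogonality, hence
`r π` is a split mono and so is `r (δ ≫ π⟦1⟧')`, a morphism between objects of pure weight `n`.
Fullness and conservativity on the heart lift this to a split mono `δ ≫ π⟦1⟧'`; thus `δ` is mono,
`Z ⟶ B` vanishes, and `Z` is a retract of `A`, of weights `≤ n - 1`. Once `Z` is pure,
conservativity on the heart gives `Z = 0`.
-/

open CategoryTheory CategoryTheory.Limits CategoryTheory.Pretriangulated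

namespace Paper

/-- A morphism `f : X ⟶ Y` belongs to the radical of a preadditive category if,
for every `g : Y ⟶ X`, the endomorphism `𝟙 X - g ∘ f` is invertible. -/
def InRadical {C : Type*} [Category C] [Preadditive C] {X Y : C} (f : X ⟶ Y) : Prop :=
  ∀ g : Y ⟶ X, IsIso (𝟙 X - f ≫ g)

/-- The Jacobson radical of a (possibly noncommutative) ring, as a two-sided ideal. -/
def ringRadical (R : Type*) [Ring R] : TwoSidedIdeal R :=
  TwoSidedIdeal.jacobson ⊥

/-- A ring is semi-primary if its (Jacobson) radical is nilpotent and the quotient by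
the radical is a semisimple ring. -/
def IsSemiprimaryRing (R : Type*) [Ring R] : Prop :=
  IsSemisimpleRing (ringRadical R).ringCon.Quotient ∧
    ∃ n : ℕ, ∀ f : Fin n → R, (∀ i, f i ∈ ringRadical R) → (List.ofFn f).prod = 0

/-- A class of objects of a preadditive category is semi-primary (André–Kahn) if the
endomorphism ring of each of its objects is a semi-primary ring; for an object `X`,
the radical ideal `rad(X,X)` is exactly the Jacobson radical of `End X`. -/
def SemiprimaryOn {C : Type*} [Category C] [Preadditive C] (P : Set C) : Prop :=
  ∀ X : C, X ∈ P → IsSemiprimaryRing (CategoryTheory.End X)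

/-- A class of objects is pseudo-Abelian (idempotent complete) if every idempotent
endomorphism of one of its objects splits through an object of the class. -/
def PseudoAbelianOn {C : Type*} [Category C] [Preadditive C] (P : Set C) : Prop :=
  ∀ X : C, X ∈ P → ∀ e : X ⟶ X, e ≫ e = e →
    ∃ (Y : C) (_ : Y ∈ P) (p : X ⟶ Y) (i : Y ⟶ X), p ≫ i = e ∧ i ≫ p = 𝟙 Y

variable (C : Type*) [Category C] [Preadditive C] [HasZeroObject C] [HasShift C ℤ]
  [∀ n : ℤ, (CategoryTheory.shiftFunctor C n).Additive] [Pretriangulated C]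

/-- A weight structure on a pretriangulated category: classes `le = C_{w≤0}` and
`ge = C_{w≥0}`, additive (containing zero objects, closed under finite direct sums)
and closed under retracts, with `C_{w≤0} ⊆ C_{w≤1}`, `C_{w≥1} ⊆ C_{w≥0}`,
orthogonality, and existence of weight decompositions. -/
structure WeightStructure where
  le : Set C
  ge : Set C
  le_retract : ∀ {X Y : C} (i : X ⟶ Y) (p : Y ⟶ X), i ≫ p = 𝟙 X → Y ∈ le → X ∈ le
  ge_retract : ∀ {X Y : C} (i : X ⟶ Y) (p : Y ⟶ X), i ≫ p = 𝟙 X → Y ∈ ge → X ∈ ge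
  le_zero : ∀ X : C, IsZero X → X ∈ le
  ge_zero : ∀ X : C, IsZero X → X ∈ ge
  le_add : ∀ {X Y : C} (b : BinaryBicone X Y), b.IsBilimit → X ∈ le → Y ∈ le → b.pt ∈ le
  ge_add : ∀ {X Y : C} (b : BinaryBicone X Y), b.IsBilimit → X ∈ ge → Y ∈ ge → b.pt ∈ ge
  le_shift : ∀ X : C, X ∈ le → X⟦(-1 : ℤ)⟧ ∈ le
  ge_shift : ∀ X : C, X ∈ ge → X⟦(1 : ℤ)⟧ ∈ ge
  orthogonal : ∀ {X Y : C}, X ∈ le → Y⟦(-1 : ℤ)⟧ ∈ ge → ∀ f : X ⟶ Y, f = 0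
  exists_decomp : ∀ M : C, ∃ (A B : C) (f : A ⟶ M) (g : M ⟶ B) (h : B ⟶ A⟦(1 : ℤ)⟧),
    (Triangle.mk f g h ∈ distTriang C) ∧ A ∈ le ∧ B⟦(-1 : ℤ)⟧ ∈ ge

namespace WeightStructure

variable {C} (w : WeightStructure C)

/-- `C_{w ≤ n} := C_{w ≤ 0}[n]`. -/
def leN (n : ℤ) : Set C := {X : C | X⟦-n⟧ ∈ w.le}

/-- `C_{w ≥ n} := C_{w ≥ 0}[n]`. -/
def geN (n : ℤ) : Set C := {X : C | X⟦-n⟧ ∈ w.ge}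

/-- The heart `C_{w = 0} = C_{w ≤ 0} ∩ C_{w ≥ 0}`. -/
def heart : Set C := w.leN 0 ∩ w.geN 0

/-- The weight structure is bounded if every object lies in
`C_{w ≥ m} ∩ C_{w ≤ n}` for some integers `m ≤ n`. -/
def Bounded : Prop := ∀ M : C, ∃ m n : ℤ, m ≤ n ∧ M ∈ w.geN m ∧ M ∈ w.leN n

end WeightStructure

/-- A weight filtration of `M` concentrated at `n`: an exact triangle
`M_{≤ n-1} ⟶ M ⟶ M_{≥ n} ⟶(δ) M_{≤ n-1}[1]` with the two outer terms in
`C_{w ≤ n-1}` and `C_{w ≥ n}` respectively. -/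
def IsWeightFiltrationAt {C : Type*} [Category C] [Preadditive C] [HasZeroObject C]
    [HasShift C ℤ] [∀ n : ℤ, (CategoryTheory.shiftFunctor C n).Additive] [Pretriangulated C]
    (w : WeightStructure C) (n : ℤ) {A M B : C}
    (f : A ⟶ M) (g : M ⟶ B) (δ : B ⟶ A⟦(1 : ℤ)⟧) : Prop :=
  (Triangle.mk f g δ ∈ distTriang C) ∧ A ∈ w.leN (n - 1) ∧ B ∈ w.geN n

/-- A minimal weight filtration concentrated at `n`: a weight filtration concentrated
at `n` whose connecting morphism lies in the radical. -/
def IsMinimalWeightFiltrationAt {C : Type*} [Category C] [Preadditive C] [HasZeroObject C]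
    [HasShift C ℤ] [∀ n : ℤ, (CategoryTheory.shiftFunctor C n).Additive] [Pretriangulated C]
    (w : WeightStructure C) (n : ℤ) {A M B : C}
    (f : A ⟶ M) (g : M ⟶ B) (δ : B ⟶ A⟦(1 : ℤ)⟧) : Prop :=
  IsWeightFiltrationAt w n f g δ ∧ InRadical δ

/-- `M` is without weights `α, α+1, …, β` if it admits a weight filtration avoiding
these weights. -/
def WithoutWeights {C : Type*} [Category C] [Preadditive C] [HasZeroObject C]
    [HasShift C ℤ] [∀ n : ℤ, (CategoryTheory.shiftFunctor C n).Additive] [Pretriangulated C]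
    (w : WeightStructure C) (α β : ℤ) (M : C) : Prop :=
  ∃ (A B : C) (f : A ⟶ M) (g : M ⟶ B) (δ : B ⟶ A⟦(1 : ℤ)⟧),
    (Triangle.mk f g δ ∈ distTriang C) ∧ A ∈ w.leN (α - 1) ∧ B ∈ w.geN (β + 1)

/-- A functor is weight exact if it respects both classes of the weight structures. -/
def WeightExact {C₁ : Type*} [Category C₁] [Preadditive C₁] [HasZeroObject C₁] [HasShift C₁ ℤ]
    [∀ n : ℤ, (CategoryTheory.shiftFunctor C₁ n).Additive] [Pretriangulated C₁]
    {C₂ : Type*} [Category C₂] [Preadditive C₂] [HasZeroObject C₂] [HasShift C₂ ℤ]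
    [∀ n : ℤ, (CategoryTheory.shiftFunctor C₂ n).Additive] [Pretriangulated C₂]
    (w₁ : WeightStructure C₁) (w₂ : WeightStructure C₂) (r : C₁ ⥤ C₂) : Prop :=
  (∀ X : C₁, X ∈ w₁.le → r.obj X ∈ w₂.le) ∧ (∀ X : C₁, X ∈ w₁.ge → r.obj X ∈ w₂.ge)

lemma distinguished_of_iso_obj₂ {C : Type*} [Category C] [Preadditive C] [HasZeroObject C]
    [HasShift C ℤ] [∀ n : ℤ, (shiftFunctor C n).Additive] [Pretriangulated C]
    {T : Triangle C} (hT : T ∈ distTriang C) {M : C} (e : T.obj₂ ≅ M) :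
    Triangle.mk (T.mor₁ ≫ e.hom) (e.inv ≫ T.mor₂) T.mor₃ ∈ distTriang C :=
  isomorphic_distinguished _ hT _
    (Triangle.isoMk _ _ (Iso.refl _) e.symm (Iso.refl _)
      (by simp [Triangle.mk]) (by simp [Triangle.mk]) (by simp [Triangle.mk]))

namespace WeightStructure

variable {C} (w : WeightStructure C)

def heartN (n : ℤ) : Set C := w.leN n ∩ w.geN n

lemma mem_le_of_iso {X Y : C} (e : X ≅ Y) (h : Y ∈ w.le) : X ∈ w.le :=
  w.le_retract e.hom e.inv e.hom_inv_id h

lemma mem_ge_of_iso {X Y : C} (e : X ≅ Y) (h : Y ∈ w.ge) : X ∈ w.ge :=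
  w.ge_retract e.hom e.inv e.hom_inv_id h

lemma mem_leN_of_retract {X Y : C} (i : X ⟶ Y) (p : Y ⟶ X) (hip : i ≫ p = 𝟙 X) {n : ℤ}
    (h : Y ∈ w.leN n) : X ∈ w.leN n :=
  w.le_retract (i⟦-n⟧') (p⟦-n⟧') (by rw [← Functor.map_comp, hip, (shiftFunctor C (-n)).map_id]) h

lemma mem_geN_of_retract {X Y : C} (i : X ⟶ Y) (p : Y ⟶ X) (hip : i ≫ p = 𝟙 X) {n : ℤ}
    (h : Y ∈ w.geN n) : X ∈ w.geN n :=
  w.ge_retract (i⟦-n⟧') (p⟦-n⟧') (by rw [← Functor.map_comp, hip, (shiftFunctor C (-n)).map_id]) h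

lemma mem_geN_of_iso {X Y : C} (e : X ≅ Y) {n : ℤ} (h : Y ∈ w.geN n) : X ∈ w.geN n :=
  w.mem_geN_of_retract e.hom e.inv e.hom_inv_id h

lemma mem_leN_zero_iff {X : C} : X ∈ w.leN 0 ↔ X ∈ w.le :=
  let e : X⟦-(0 : ℤ)⟧ ≅ X := (shiftFunctorZero' C (-(0 : ℤ)) neg_zero).app X
  ⟨w.mem_le_of_iso e.symm, w.mem_le_of_iso e⟩

lemma shift_mem_leN_iff (X : C) (j n : ℤ) : X⟦j⟧ ∈ w.leN n ↔ X ∈ w.leN (n - j) :=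
  let e : X⟦-(n - j)⟧ ≅ X⟦j⟧⟦-n⟧ := (shiftFunctorAdd' C j (-n) (-(n - j)) (by ring)).app X
  ⟨w.mem_le_of_iso e, w.mem_le_of_iso e.symm⟩

lemma shift_mem_geN_iff (X : C) (j n : ℤ) : X⟦j⟧ ∈ w.geN n ↔ X ∈ w.geN (n - j) :=
  let e : X⟦-(n - j)⟧ ≅ X⟦j⟧⟦-n⟧ := (shiftFunctorAdd' C j (-n) (-(n - j)) (by ring)).app X
  ⟨w.mem_ge_of_iso e, w.mem_ge_of_iso e.symm⟩

lemma shift_mem_heartN {X : C} {n : ℤ} (h : X ∈ w.heartN n) : X⟦-n⟧ ∈ w.heart :=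
  ⟨(w.shift_mem_leN_iff X _ _).2 (by simpa using h.1),
    (w.shift_mem_geN_iff X _ _).2 (by simpa using h.2)⟩

lemma mem_leN_of_le {X : C} {a b : ℤ} (hab : a ≤ b) (h : X ∈ w.leN a) : X ∈ w.leN b := by
  induction b, hab using Int.leInduction with
  | base => exact h
  | succ k _ ih =>
    exact w.mem_le_of_iso ((shiftFunctorAdd' C (-k) (-1) (-(k + 1)) (by ring)).app X)
      (w.le_shift _ ih)

lemma mem_geN_of_le {X : C} {a b : ℤ} (hab : a ≤ b) (h : X ∈ w.geN b) : X ∈ w.geN a := by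
  induction a, hab using Int.leInductionDown with
  | base => exact h
  | pred k _ ih =>
    exact w.mem_ge_of_iso ((shiftFunctorAdd' C (-k) 1 (-(k - 1)) (by ring)).app X)
      (w.ge_shift _ ih)

lemma isZero_mem_heartN {X : C} (h : IsZero X) (n : ℤ) : X ∈ w.heartN n :=
  ⟨w.le_zero _ ((shiftFunctor C (-n)).map_isZero h),
    w.ge_zero _ ((shiftFunctor C (-n)).map_isZero h)⟩

lemma hom_eq_zero {X Y : C} {a b : ℤ} (hab : a < b) (hX : X ∈ w.leN a) (hY : Y ∈ w.geN b)
    (f : X ⟶ Y) : f = 0 := by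
  have hY' : Y⟦-a⟧ ∈ w.geN 1 :=
    (w.shift_mem_geN_iff Y _ _).2 (w.mem_geN_of_le (by omega) hY)
  apply (shiftFunctor C (-a)).map_injective
  rw [w.orthogonal hX hY' (f⟦-a⟧'), Functor.map_zero]

lemma exists_decomp_at (M : C) (n : ℤ) :
    ∃ (A B : C) (f : A ⟶ M) (g : M ⟶ B) (δ : B ⟶ A⟦(1 : ℤ)⟧),
      Triangle.mk f g δ ∈ distTriang C ∧ A ∈ w.leN (n - 1) ∧ B ∈ w.geN n := by
  obtain ⟨A, B, f, g, δ, hT, hA, hB⟩ := w.exists_decomp (M⟦-(n - 1)⟧)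
  refine ⟨_, _, _, _, _, distinguished_of_iso_obj₂ (Triangle.shift_distinguished _ hT (n - 1))
      ((shiftFunctorCompIsoId C (-(n - 1)) (n - 1) (by ring)).app M),
    (w.shift_mem_leN_iff A _ _).2 (by simpa [w.mem_leN_zero_iff] using hA),
    (w.shift_mem_geN_iff B _ _).2 (by rw [sub_sub_cancel]; exact hB)⟩

lemma mem_leN_of_distTriang_of_mor₂_eq_zero {T : Triangle C} (hT : T ∈ distTriang C)
    (h : T.mor₂ = 0) {n : ℤ} (h₁ : T.obj₁ ∈ w.leN n) : T.obj₂ ∈ w.leN n := by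
  have : Epi T.mor₁ := Triangle.epi₁ _ hT h
  have : IsSplitEpi T.mor₁ := isSplitEpi_of_epi _
  exact w.mem_leN_of_retract (section_ T.mor₁) T.mor₁ (IsSplitEpi.id _) h₁

lemma mem_leN_of_distTriang {T : Triangle C} (hT : T ∈ distTriang C) {n : ℤ}
    (h₁ : T.obj₁ ∈ w.leN n) (h₃ : T.obj₃ ∈ w.leN n) : T.obj₂ ∈ w.leN n := by
  obtain ⟨A, B, f, g, δ, hT', hA, hB⟩ := w.exists_decomp_at T.obj₂ (n + 1)
  have hg : g = 0 := by
    obtain ⟨h, rfl⟩ := Triangle.yoneda_exact₂ T hT g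
      (w.hom_eq_zero (lt_add_one n) h₁ hB _)
    rw [w.hom_eq_zero (lt_add_one n) h₃ hB h, comp_zero]
  exact w.mem_leN_of_distTriang_of_mor₂_eq_zero hT' hg (by simpa using hA)

end WeightStructure

section Functor

variable {C₁ C₂ : Type*} [Category C₁] [Category C₂]

def FullOn (r : C₁ ⥤ C₂) (P : Set C₁) : Prop :=
  ∀ X Y : C₁, X ∈ P → Y ∈ P → ∀ g : r.obj X ⟶ r.obj Y, ∃ f : X ⟶ Y, r.map f = g

def ReflectsIsosOn (r : C₁ ⥤ C₂) (P : Set C₁) : Prop :=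
  ∀ X Y : C₁, X ∈ P → Y ∈ P → ∀ f : X ⟶ Y, IsIso (r.map f) → IsIso f

lemma isSplitMono_of_isSplitMono_map_of_mem {r : C₁ ⥤ C₂} {P : Set C₁} (hfull : FullOn r P)
    (hcons : ReflectsIsosOn r P) {X Y : C₁} (hX : X ∈ P) (hY : Y ∈ P) (u : X ⟶ Y)
    [IsSplitMono (r.map u)] : IsSplitMono u := by
  obtain ⟨σ, hσ⟩ := hfull Y X hY hX (retraction (r.map u))
  have : IsIso (u ≫ σ) := hcons X X hX hX _ (by rw [r.map_comp, hσ, IsSplitMono.id]; infer_instance)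
  exact IsSplitMono.mk' ⟨σ ≫ inv (u ≫ σ), by rw [← Category.assoc, IsIso.hom_inv_id]⟩

lemma isSplitMono_map_shift {A : Type*} [AddMonoid A] [HasShift C₁ A] [HasShift C₂ A]
    (r : C₁ ⥤ C₂) [r.CommShift A] {X Y : C₁} (f : X ⟶ Y) [IsSplitMono (r.map f)] (a : A) :
    IsSplitMono (r.map (f⟦a⟧')) := by
  have h : r.map (f⟦a⟧') =
      ((r.commShiftIso a).hom.app X ≫ (r.map f)⟦a⟧') ≫ (r.commShiftIso a).inv.app Y := by
    simp
  rw [h]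
  infer_instance

end Functor

section Triangulated

variable {C₁ : Type*} [Category C₁] [Preadditive C₁] [HasZeroObject C₁] [HasShift C₁ ℤ]
  [∀ n : ℤ, (shiftFunctor C₁ n).Additive] [Pretriangulated C₁]
  {C₂ : Type*} [Category C₂] [HasShift C₂ ℤ] {w₁ : WeightStructure C₁} {r : C₁ ⥤ C₂}

lemma isSplitMono_of_isSplitMono_map_of_mem_heartN [r.CommShift ℤ] (hfull : FullOn r w₁.heart)
    (hcons : ReflectsIsosOn r w₁.heart) {n : ℤ} {X Y : C₁} (hX : X ∈ w₁.heartN n)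
    (hY : Y ∈ w₁.heartN n) (u : X ⟶ Y) [IsSplitMono (r.map u)] : IsSplitMono u := by
  have := isSplitMono_map_shift r u (-n)
  have := isSplitMono_of_isSplitMono_map_of_mem hfull hcons
    (w₁.shift_mem_heartN hX) (w₁.shift_mem_heartN hY) (u⟦-n⟧')
  exact ((shiftFunctor C₁ (-n)).isSplitMono_iff u).1 this

open ZeroObject in
lemma isZero_of_mem_heartN_of_isZero_map [r.CommShift ℤ] (hfull : FullOn r w₁.heart)
    (hcons : ReflectsIsosOn r w₁.heart) {n : ℤ} {X : C₁} (hX : X ∈ w₁.heartN n)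
    (hz : IsZero (r.obj X)) : IsZero X := by
  have : IsSplitMono (r.map (0 : X ⟶ 0)) := IsSplitMono.mk' ⟨hz.from_ _, hz.eq_of_src _ _⟩
  have := isSplitMono_of_isSplitMono_map_of_mem_heartN hfull hcons hX
    (w₁.isZero_mem_heartN (isZero_zero C₁) n) (0 : X ⟶ 0)
  exact IsZero.of_mono (0 : X ⟶ 0) (isZero_zero C₁)

variable [Preadditive C₂] [HasZeroObject C₂] [∀ n : ℤ, (shiftFunctor C₂ n).Additive]
  [Pretriangulated C₂] {w₂ : WeightStructure C₂}

lemma map_mem_leN [r.CommShift ℤ] (hwe : WeightExact w₁ w₂ r) {X : C₁} {n : ℤ}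
    (h : X ∈ w₁.leN n) : r.obj X ∈ w₂.leN n :=
  w₂.mem_le_of_iso ((r.commShiftIso (-n)).app X).symm (hwe.1 _ h)

lemma map_mem_geN [r.CommShift ℤ] (hwe : WeightExact w₁ w₂ r) {X : C₁} {n : ℤ}
    (h : X ∈ w₁.geN n) : r.obj X ∈ w₂.geN n :=
  w₂.mem_ge_of_iso ((r.commShiftIso (-n)).app X).symm (hwe.2 _ h)

lemma isIso_map_mor₃_of_isZero_map_obj₂ [r.CommShift ℤ] [r.IsTriangulated] {T : Triangle C₁}
    (hT : T ∈ distTriang C₁) (h : IsZero (r.obj T.obj₂)) : IsIso (r.map T.mor₃) := by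
  have : IsIso (r.map T.mor₃ ≫ (r.commShiftIso (1 : ℤ)).hom.app T.obj₁) :=
    (Triangle.isZero₂_iff_isIso₃ _ (r.map_distinguished _ hT)).1 h
  exact IsIso.of_isIso_comp_right (r.map T.mor₃) ((r.commShiftIso (1 : ℤ)).hom.app T.obj₁)

lemma mono_mor₃_of_isZero_map [r.CommShift ℤ] [r.IsTriangulated] (hwe : WeightExact w₁ w₂ r)
    (hfull : FullOn r w₁.heart) (hcons : ReflectsIsosOn r w₁.heart)
    {A X B : C₁} {f : A ⟶ X} {g : X ⟶ B} {δ : B ⟶ A⟦(1 : ℤ)⟧}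
    (hT : Triangle.mk f g δ ∈ distTriang C₁) {n : ℤ} (hA : A ∈ w₁.leN (n - 1))
    (hB : B ∈ w₁.heartN n) (hX : IsZero (r.obj X)) : Mono δ := by
  have : IsIso (r.map δ) := isIso_map_mor₃_of_isZero_map_obj₂ hT hX
  have hrA : r.obj A ∈ w₂.geN (n - 1) := (w₂.shift_mem_geN_iff _ _ _).1 <|
    w₂.mem_geN_of_iso (((r.commShiftIso (1 : ℤ)).app A).symm ≪≫ (asIso (r.map δ)).symm)
      (map_mem_geN hwe hB.2)
  obtain ⟨A', B', f', π, δ', hT', hA', hB'⟩ := w₁.exists_decomp_at A (n - 1)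
  have hB'le : B' ∈ w₁.leN (n - 1) := w₁.mem_leN_of_distTriang (rot_of_distTriang _ hT') hA
    ((w₁.shift_mem_leN_iff _ _ _).2 hA')
  have : Mono (r.map π) := Triangle.mono₂ _ (r.map_distinguished _ hT')
    (w₂.hom_eq_zero (sub_one_lt _) (map_mem_leN hwe hA') hrA _)
  have : IsSplitMono (r.map π) := isSplitMono_of_mono _
  have := isSplitMono_map_shift r π (1 : ℤ)
  have : IsSplitMono (r.map (δ ≫ π⟦(1 : ℤ)⟧')) := by rw [r.map_comp]; infer_instance
  have hB'₁ : B'⟦(1 : ℤ)⟧ ∈ w₁.heartN n :=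
    ⟨(w₁.shift_mem_leN_iff _ _ _).2 hB'le, (w₁.shift_mem_geN_iff _ _ _).2 hB'⟩
  have := isSplitMono_of_isSplitMono_map_of_mem_heartN hfull hcons hB hB'₁ (δ ≫ π⟦(1 : ℤ)⟧')
  exact mono_of_mono δ (π⟦(1 : ℤ)⟧')

lemma mem_leN_sub_one_of_isZero_map [r.CommShift ℤ] [r.IsTriangulated]
    (hwe : WeightExact w₁ w₂ r) (hfull : FullOn r w₁.heart) (hcons : ReflectsIsosOn r w₁.heart)
    {X : C₁} {n : ℤ} (hX : X ∈ w₁.leN n) (hz : IsZero (r.obj X)) : X ∈ w₁.leN (n - 1) := by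
  obtain ⟨A, B, f, g, δ, hT, hA, hB⟩ := w₁.exists_decomp_at X n
  have hBle : B ∈ w₁.leN n := w₁.mem_leN_of_distTriang (rot_of_distTriang _ hT) hX
    ((w₁.shift_mem_leN_iff _ _ _).2 hA)
  have := mono_mor₃_of_isZero_map hwe hfull hcons hT hA ⟨hBle, hB⟩ hz
  exact w₁.mem_leN_of_distTriang_of_mor₂_eq_zero hT (Triangle.mor₂_eq_zero_of_mono₃ _ hT this) hA

lemma isZero_of_isZero_map [r.CommShift ℤ] [r.IsTriangulated] (hwe : WeightExact w₁ w₂ r)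
    (hfull : FullOn r w₁.heart) (hcons : ReflectsIsosOn r w₁.heart) {X : C₁} {m n : ℤ}
    (hm : X ∈ w₁.geN m) (hn : X ∈ w₁.leN n) (hz : IsZero (r.obj X)) : IsZero X := by
  have hle : ∀ k ≤ n, X ∈ w₁.leN k := by
    intro k hk
    induction k, hk using Int.leInductionDown with
    | base => exact hn
    | pred k _ ih => exact mem_leN_sub_one_of_isZero_map hwe hfull hcons ih hz
  exact isZero_of_mem_heartN_of_isZero_map hfull hcons
    ⟨w₁.mem_leN_of_le (min_le_left m n) (hle _ (min_le_right m n)), hm⟩ hz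

end Triangulated

theorem statement2
    (F : Type*) [Field F] [CharZero F]
    {C₁ : Type*} [Category C₁] [Preadditive C₁] [HasZeroObject C₁] [HasShift C₁ ℤ]
    [∀ n : ℤ, (CategoryTheory.shiftFunctor C₁ n).Additive] [Pretriangulated C₁] [CategoryTheory.Linear F C₁]
    {C₂ : Type*} [Category C₂] [Preadditive C₂] [HasZeroObject C₂] [HasShift C₂ ℤ]
    [∀ n : ℤ, (CategoryTheory.shiftFunctor C₂ n).Additive] [Pretriangulated C₂] [CategoryTheory.Linear F C₂]
    (w₁ : WeightStructure C₁) (w₂ : WeightStructure C₂)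
    (r : C₁ ⥤ C₂) [r.Additive] [Functor.Linear F r] [r.CommShift ℤ] [r.IsTriangulated]
    (hbounded : w₁.Bounded)
    (hsemiprimary : SemiprimaryOn w₁.heart) (hpseudoabelian : PseudoAbelianOn w₁.heart)
    (hwe : WeightExact w₁ w₂ r)
    (hfull : ∀ X Y : C₁, X ∈ w₁.heart → Y ∈ w₁.heart →
      ∀ g : r.obj X ⟶ r.obj Y, ∃ f : X ⟶ Y, r.map f = g)
    (hcons : ∀ X Y : C₁, X ∈ w₁.heart → Y ∈ w₁.heart →
      ∀ f : X ⟶ Y, IsIso (r.map f) → IsIso f)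
    {M N : C₁} (f : M ⟶ N) (hf : IsIso (r.map f)) :
    IsIso f := by
  obtain ⟨Z, g, h, hT⟩ := distinguished_cocone_triangle f
  have hrZ : IsZero (r.obj Z) := Triangle.isZero₃_of_isIso₁ _ (r.map_distinguished _ hT) hf
  obtain ⟨m, n, -, hm, hn⟩ := hbounded Z
  exact (Triangle.isZero₃_iff_isIso₁ _ hT).1 (isZero_of_isZero_map hwe hfull hcons hm hn hrZ)

end Paper
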